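/- Main Theorem: Let (X,d) be a nonempty complete metric space, φ a comparison function, and T : X → X a weak φ-quasicontraction. Then T has a unique fixed point x₀ ∈ X, and moreover for every x ∈ X the sequence of iterates (Tⁿx) converges to x₀. -/
import Mathlib


open Metric Set Function Filter Topology

def IsComparisonFn (φ : ℝ → ℝ) : Prop :=
  MonotoneOn φ (Set.Ici 0) ∧ UpperSemicontinuousOn φ (Set.Ici 0) ∧
    (∀ t, 0 ≤ t → 0 ≤ φ t) ∧ φ 0 = 0 ∧ ∀ t, 0 < t → φ t < t

def orbitOf {X : Type*} (T : X → X) (x : X) : Set X :=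
  Set.range fun n : ℕ => T^[n] x

def dorbitOf {X : Type*} (T : X → X) (x y : X) : Set X :=
  orbitOf T x ∪ orbitOf T y

def IsWeakQuasicontraction {X : Type*} [MetricSpace X] (φ : ℝ → ℝ) (T : X → X) : Prop :=
  (∀ x : X, Bornology.IsBounded (orbitOf T x)) ∧
    ∀ x y : X, dist (T x) (T y) ≤ φ (Metric.diam (dorbitOf T x y))

def IsStrongQuasicontraction {X : Type*} [MetricSpace X] (φ : ℝ → ℝ) (T : X → X) : Prop :=
  ∀ x y : X, dist (T x) (T y) ≤ φ (Metric.diam {x, y, T x, T y})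

section Aux

variable {X : Type*} [MetricSpace X] (φ : ℝ → ℝ) (T : X → X)

lemma self_mem_orbitOf (x : X) : x ∈ orbitOf T x := ⟨0, rfl⟩

lemma iterate_mem_orbitOf {N n : ℕ} (h : N ≤ n) (x : X) :
    T^[n] x ∈ orbitOf T (T^[N] x) :=
  ⟨n - N, show T^[n-N] (T^[N] x) = T^[n] x by
    rw [← Function.iterate_add_apply, Nat.sub_add_cancel h]⟩

lemma orbitOf_iterate_subset (x : X) (n : ℕ) :
    orbitOf T (T^[n] x) ⊆ orbitOf T x := by
  rintro _ ⟨m, rfl⟩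
  exact ⟨m + n, Function.iterate_add_apply T m n x⟩

lemma dorbitOf_self (x : X) : dorbitOf T x x = orbitOf T x := Set.union_self _

lemma bounded_dorbit (hT : IsWeakQuasicontraction φ T) (x y : X) :
    Bornology.IsBounded (dorbitOf T x y) := (hT.1 x).union (hT.1 y)

lemma diam_step (hφ : IsComparisonFn φ) (hT : IsWeakQuasicontraction φ T) (x y : X) :
    Metric.diam (dorbitOf T (T x) (T y)) ≤ φ (Metric.diam (dorbitOf T x y)) := by
  apply Metric.diam_le_of_forall_dist_le (hφ.2.2.1 _ Metric.diam_nonneg)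
  have key : ∀ u ∈ dorbitOf T (T x) (T y),
      ∃ a, u = T a ∧ orbitOf T a ⊆ dorbitOf T x y := by
    rintro u (⟨m, rfl⟩ | ⟨m, rfl⟩)
    · exact ⟨T^[m] x,
        show T^[m] (T x) = T (T^[m] x) by
          rw [← Function.iterate_succ_apply, Function.iterate_succ_apply'],
        (orbitOf_iterate_subset T x m).trans Set.subset_union_left⟩
    · exact ⟨T^[m] y,
        show T^[m] (T y) = T (T^[m] y) by
          rw [← Function.iterate_succ_apply, Function.iterate_succ_apply'],
        (orbitOf_iterate_subset T y m).trans Set.subset_union_right⟩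
  intro u hu v hv
  obtain ⟨a, rfl, ha⟩ := key u hu
  obtain ⟨b, rfl, hb⟩ := key v hv
  calc dist (T a) (T b) ≤ φ (Metric.diam (dorbitOf T a b)) := hT.2 a b
    _ ≤ φ (Metric.diam (dorbitOf T x y)) :=
      hφ.1 Metric.diam_nonneg Metric.diam_nonneg
        (Metric.diam_mono (Set.union_subset ha hb) (bounded_dorbit φ T hT x y))

lemma key_tendsto (hφ : IsComparisonFn φ) (hT : IsWeakQuasicontraction φ T) (x y : X) :
    Tendsto (fun n : ℕ => Metric.diam (dorbitOf T (T^[n] x) (T^[n] y))) atTop (𝓝 0) := by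
  set b : ℕ → ℝ := fun n => Metric.diam (dorbitOf T (T^[n] x) (T^[n] y)) with hbdef
  have hpos : ∀ n, 0 ≤ b n := fun n => Metric.diam_nonneg
  have hsub : ∀ n : ℕ, dorbitOf T (T^[n+1] x) (T^[n+1] y) ⊆ dorbitOf T (T^[n] x) (T^[n] y) := by
    intro n
    refine Set.union_subset ((?_ : _ ⊆ orbitOf T (T^[n] x)).trans Set.subset_union_left)
      ((?_ : _ ⊆ orbitOf T (T^[n] y)).trans Set.subset_union_right)
    · rw [Function.iterate_succ_apply']
      simpa using orbitOf_iterate_subset T (T^[n] x) 1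
    · rw [Function.iterate_succ_apply']
      simpa using orbitOf_iterate_subset T (T^[n] y) 1
  have hanti : Antitone b := antitone_nat_of_succ_le fun n =>
    Metric.diam_mono (hsub n) (bounded_dorbit φ T hT _ _)
  have hbdd : BddBelow (Set.range b) := ⟨0, by rintro _ ⟨n, rfl⟩; exact hpos n⟩
  have hlim : Tendsto b atTop (𝓝 (⨅ n, b n)) := tendsto_atTop_ciInf hanti hbdd
  set c := ⨅ n, b n with hcdef
  have hc0 : 0 ≤ c := le_ciInf hpos
  have hcb : ∀ n, c ≤ b n := fun n => ciInf_le hbdd n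
  have hstep : ∀ n, b (n+1) ≤ φ (b n) := by
    intro n
    simp only [hbdef, Function.iterate_succ_apply']
    exact diam_step φ T hφ hT _ _
  have hc0' : c = 0 := by
    by_contra h
    have hcpos : 0 < c := lt_of_le_of_ne hc0 (Ne.symm h)
    have hφc : φ c < c := hφ.2.2.2.2 c hcpos
    have husc := hφ.2.1 c hc0 c hφc
    have hbnd : Tendsto b atTop (𝓝[Set.Ici 0] c) :=
      tendsto_nhdsWithin_of_tendsto_nhds_of_eventually_within b hlim
        (Eventually.of_forall fun n => Set.mem_Ici.mpr (hpos n))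
    obtain ⟨n, hn⟩ := (hbnd.eventually husc).exists
    exact lt_irrefl c (lt_of_le_of_lt ((hcb (n+1)).trans (hstep n)) hn)
  rw [hc0'] at hlim
  exact hlim

end Aux

theorem weakQuasicontraction_fixedPoint {X : Type*} [MetricSpace X] [CompleteSpace X]
    [Nonempty X] (φ : ℝ → ℝ) (T : X → X)
    (hφ : IsComparisonFn φ) (hT : IsWeakQuasicontraction φ T) :
    ∃ x₀ : X, T x₀ = x₀ ∧ (∀ y : X, T y = y → y = x₀) ∧
      ∀ x : X, Filter.Tendsto (fun n : ℕ => T^[n] x) Filter.atTop (nhds x₀) := by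
  obtain ⟨xs⟩ := ‹Nonempty X›
  -- the orbit of xs is Cauchy
  have hcauchy : CauchySeq fun n : ℕ => T^[n] xs := by
    apply cauchySeq_of_le_tendsto_0
      (fun N => Metric.diam (dorbitOf T (T^[N] xs) (T^[N] xs)))
      (fun n m N hn hm => ?_) (key_tendsto φ T hφ hT xs xs)
    exact Metric.dist_le_diam_of_mem (bounded_dorbit φ T hT _ _)
      (Or.inl (iterate_mem_orbitOf T hn xs)) (Or.inl (iterate_mem_orbitOf T hm xs))
  obtain ⟨x₀, hx₀⟩ := cauchySeq_tendsto_of_complete hcauchy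
  -- the orbit of x₀ converges to x₀
  have hx0conv : Tendsto (fun n : ℕ => T^[n] x₀) atTop (𝓝 x₀) := by
    rw [tendsto_iff_dist_tendsto_zero]
    apply squeeze_zero (fun n => dist_nonneg)
      (g := fun n => Metric.diam (dorbitOf T (T^[n] x₀) (T^[n] xs)) + dist (T^[n] xs) x₀)
    · intro n
      calc dist (T^[n] x₀) x₀ ≤ dist (T^[n] x₀) (T^[n] xs) + dist (T^[n] xs) x₀ :=
            dist_triangle _ _ _
        _ ≤ Metric.diam (dorbitOf T (T^[n] x₀) (T^[n] xs)) + dist (T^[n] xs) x₀ := by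
            gcongr
            exact Metric.dist_le_diam_of_mem (bounded_dorbit φ T hT _ _)
              (Or.inl (self_mem_orbitOf T _)) (Or.inr (self_mem_orbitOf T _))
    · have h1 := key_tendsto φ T hφ hT x₀ xs
      have h2 := tendsto_iff_dist_tendsto_zero.mp hx₀
      simpa using h1.add h2
  -- the orbit of x₀ has zero diameter
  set D := Metric.diam (orbitOf T x₀) with hDdef
  have h1 : Metric.diam (orbitOf T (T x₀)) ≤ φ D := by
    have := diam_step φ T hφ hT x₀ x₀
    rwa [dorbitOf_self, dorbitOf_self] at this
  have hmem1 : ∀ k : ℕ, 1 ≤ k → T^[k] x₀ ∈ orbitOf T (T x₀) := by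
    intro k hk
    have := iterate_mem_orbitOf T hk x₀ (N := 1)
    simpa using this
  have h2 : ∀ n : ℕ, 1 ≤ n → dist x₀ (T^[n] x₀) ≤ φ D := by
    intro n hn
    have hev : ∀ᶠ m in atTop, dist x₀ (T^[n] x₀) ≤ dist x₀ (T^[m] x₀) + φ D := by
      filter_upwards [eventually_ge_atTop (max 1 n)] with m hm
      calc dist x₀ (T^[n] x₀) ≤ dist x₀ (T^[m] x₀) + dist (T^[m] x₀) (T^[n] x₀) :=
            dist_triangle _ _ _
        _ ≤ dist x₀ (T^[m] x₀) + φ D := by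
            gcongr
            calc dist (T^[m] x₀) (T^[n] x₀) ≤ Metric.diam (orbitOf T (T x₀)) :=
                  Metric.dist_le_diam_of_mem (hT.1 _)
                    (hmem1 m (le_trans (le_max_left 1 n) hm)) (hmem1 n hn)
              _ ≤ φ D := h1
    have htend : Tendsto (fun m : ℕ => dist x₀ (T^[m] x₀) + φ D) atTop (𝓝 (0 + φ D)) := by
      apply Tendsto.add _ tendsto_const_nhds
      have := tendsto_iff_dist_tendsto_zero.mp hx0conv
      simpa [dist_comm] using this
    have := ge_of_tendsto htend hev
    linarith
  have hDle : D ≤ φ D := by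
    apply Metric.diam_le_of_forall_dist_le (hφ.2.2.1 _ Metric.diam_nonneg)
    rintro _ ⟨m, rfl⟩ _ ⟨n, rfl⟩
    rcases Nat.eq_zero_or_pos m with hm | hm
    · rcases Nat.eq_zero_or_pos n with hn | hn
      · subst hm; subst hn
        simpa using hφ.2.2.1 _ Metric.diam_nonneg
      · subst hm
        simpa using h2 n hn
    · rcases Nat.eq_zero_or_pos n with hn | hn
      · subst hn
        simpa [dist_comm] using h2 m hm
      · calc dist (T^[m] x₀) (T^[n] x₀) ≤ Metric.diam (orbitOf T (T x₀)) :=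
              Metric.dist_le_diam_of_mem (hT.1 _) (hmem1 m hm) (hmem1 n hn)
          _ ≤ φ D := h1
  have hD0 : D = 0 := by
    rcases eq_or_lt_of_le (Metric.diam_nonneg : (0:ℝ) ≤ D) with h | h
    · exact h.symm
    · exact absurd hDle (not_le.mpr (hφ.2.2.2.2 D h))
  have hfix : T x₀ = x₀ := by
    have hd : dist (T x₀) x₀ ≤ D :=
      Metric.dist_le_diam_of_mem (hT.1 x₀) ⟨1, rfl⟩ ⟨0, rfl⟩
    rw [hD0] at hd
    exact dist_le_zero.mp hd
  have hiter : ∀ n : ℕ, T^[n] x₀ = x₀ := fun n => Function.iterate_fixed hfix n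
  have hconv : ∀ x : X, Tendsto (fun n : ℕ => T^[n] x) atTop (𝓝 x₀) := by
    intro x
    rw [tendsto_iff_dist_tendsto_zero]
    apply squeeze_zero (fun n => dist_nonneg)
      (g := fun n => Metric.diam (dorbitOf T (T^[n] x) (T^[n] x₀)))
    · intro n
      apply Metric.dist_le_diam_of_mem (bounded_dorbit φ T hT _ _)
        (Or.inl (self_mem_orbitOf T _))
      refine Or.inr ?_
      rw [hiter n]
      exact self_mem_orbitOf T x₀
    · exact key_tendsto φ T hφ hT x x₀
  refine ⟨x₀, hfix, ?_, hconv⟩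
  intro y hy
  have h1 := hconv y
  simp only [Function.iterate_fixed hy] at h1
  exact (tendsto_nhds_unique h1 tendsto_const_nhds).symm
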